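/- arXiv:1706.07357 — 2 statements merged into one kernel-verified Lean document; each statement's English description precedes it below -/
import Mathlib

section
/- Let n ≥ 1, r₂ > 0, y ∈ ℝⁿ, i ∈ {1,…,n}, and let f be a continuously differentiable function on an open neighborhood of B_∞(y, r₂). For z ∈ B_∞(y, r₂), let βᵢ(z) be the point obtained from z by replacing its i-th coordinate with yᵢ + r₂, and αᵢ(z) the point obtained by replacing the i-th coordinate with yᵢ − r₂; set g̃ᵢ(z) = (f(βᵢ(z)) − f(αᵢ(z)))/(2r₂). Let gᵢ be the average of ∂f/∂xᵢ over B_∞(y, r₂). Then E_{z} |g̃ᵢ(z) − gᵢ| ≤ E_{z} |∂f/∂xᵢ(z) − gᵢ|, where z is uniformly distributed on B_∞(y, r₂). -/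
/-!
Along a segment parallel to the `i`-th axis, the fundamental theorem of calculus makes the
difference quotient `g̃ᵢ` the mean of `∂f/∂xᵢ` over that segment, so for any constant `c`,
`|g̃ᵢ - c|` is at most the mean of `|∂f/∂xᵢ - c|` over the segment. Since `g̃ᵢ` does not depend
on the `i`-th coordinate, integrating this over the remaining coordinates (Fubini) gives the
inequality on the whole box.
-/

open MeasureTheory

/-- The closed `ℓ∞`-ball of radius `r` around `y` in `ℝⁿ`. -/
def Binf {n : ℕ} (y : EuclideanSpace ℝ (Fin n)) (r : ℝ) : Set (EuclideanSpace ℝ (Fin n)) :=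
  {z | ∀ i, |z i - y i| ≤ r}

open Set

theorem integral_Icc_abs_slope_sub_le {F D : ℝ → ℝ} {a b : ℝ}
    (hF : ContinuousOn F (Icc a b)) (hderiv : ∀ t ∈ Ioo a b, HasDerivAt F (D t) t)
    (hD : IntervalIntegrable D volume a b) (c : ℝ) :
    ∫ _ in Icc a b, |slope F a b - c| ≤ ∫ t in Icc a b, |D t - c| := by
  rcases lt_or_ge b a with hba | hab
  · simp [Icc_eq_empty_of_lt hba]
  have hFTC : ∫ t in a..b, (D t - c) = (b - a) * (slope F a b - c) := by
    rcases hab.eq_or_lt with rfl | hlt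
    · simp
    rw [intervalIntegral.integral_sub hD intervalIntegrable_const,
      intervalIntegral.integral_eq_sub_of_hasDerivAt_of_le hab hF hderiv hD,
      intervalIntegral.integral_const, slope_def_field, smul_eq_mul]
    field_simp [(sub_pos.2 hlt).ne']
  calc ∫ _ in Icc a b, |slope F a b - c|
      = |∫ t in a..b, (D t - c)| := by
        rw [setIntegral_const, Real.volume_real_Icc_of_le hab, hFTC, smul_eq_mul, abs_mul,
          abs_of_nonneg (sub_nonneg.2 hab)]
    _ ≤ ∫ t in a..b, |D t - c| := intervalIntegral.abs_integral_le_integral_abs hab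
    _ = ∫ t in Icc a b, |D t - c| := by
        rw [intervalIntegral.integral_of_le hab, integral_Icc_eq_integral_Ioc]

theorem setIntegral_prod_mono_of_forall_integral_le {α β : Type*} [MeasurableSpace α]
    [MeasurableSpace β] {μ : Measure α} {ν : Measure β} [SFinite μ] [SFinite ν]
    {f g : α × β → ℝ} {s : Set α} {t : Set β} (ht : MeasurableSet t)
    (hf : IntegrableOn f (s ×ˢ t) (μ.prod ν)) (hg : IntegrableOn g (s ×ˢ t) (μ.prod ν))
    (hfg : ∀ y ∈ t, ∫ x in s, f (x, y) ∂μ ≤ ∫ x in s, g (x, y) ∂μ) :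
    ∫ z in s ×ˢ t, f z ∂μ.prod ν ≤ ∫ z in s ×ˢ t, g z ∂μ.prod ν := by
  rw [IntegrableOn, ← Measure.prod_restrict] at hf hg
  rw [← Measure.prod_restrict, integral_prod_symm f hf, integral_prod_symm g hg]
  exact setIntegral_mono_on (Integrable.integral_prod_right hf) (Integrable.integral_prod_right hg)
    ht hfg

theorem setIntegral_Icc_eq_setIntegral_prod_insertNth {E : Type*} [NormedAddCommGroup E]
    [NormedSpace ℝ E] {m : ℕ} (i : Fin (m + 1)) (l u : Fin (m + 1) → ℝ)
    (G : (Fin (m + 1) → ℝ) → E) :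
    ∫ x in Icc l u, G x = ∫ p in Icc (l i) (u i) ×ˢ Icc (fun j ↦ l (i.succAbove j))
      (fun j ↦ u (i.succAbove j)), G (i.insertNth p.1 p.2) := by
  let e := MeasurableEquiv.piFinSuccAbove (fun _ ↦ ℝ) i
  have hpre : e ⁻¹' (Icc (l i) (u i) ×ˢ Icc (fun j ↦ l (i.succAbove j))
      (fun j ↦ u (i.succAbove j))) = Icc l u := by
    ext x
    rw [← Fin.insertNth_self_removeNth i x, mem_preimage, Fin.insertNth_mem_Icc]
    simp [e, and_and_and_comm]
  rw [← hpre, ← (volume_preserving_piFinSuccAbove (fun _ ↦ ℝ) i).setIntegral_preimage_emb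
    e.measurableEmbedding (fun p ↦ G (i.insertNth p.1 p.2))]
  simp [e]

theorem setIntegral_Icc_abs_slope_sub_le {m : ℕ} (i : Fin (m + 1)) {l u : Fin (m + 1) → ℝ}
    {F D : (Fin (m + 1) → ℝ) → ℝ} (hF : ContinuousOn F (Icc l u)) (hD : ContinuousOn D (Icc l u))
    (hderiv : ∀ x ∈ Icc l u, HasDerivAt (fun t ↦ F (Function.update x i t)) (D x) (x i))
    (c : ℝ) :
    ∫ x in Icc l u, |slope (fun t ↦ F (Function.update x i t)) (l i) (u i) - c|
      ≤ ∫ x in Icc l u, |D x - c| := by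
  rcases lt_or_ge (u i) (l i) with hul | hlu
  · simp [Icc_eq_empty fun hle : l ≤ u ↦ hul.not_ge (hle i)]
  set I := Icc (l i) (u i)
  set J := Icc (fun j ↦ l (i.succAbove j)) (fun j ↦ u (i.succAbove j))
  have hmem : ∀ t ∈ I, ∀ w ∈ J, i.insertNth t w ∈ Icc l u := fun t ht w hw ↦
    Fin.insertNth_mem_Icc.2 ⟨ht, hw⟩
  have hcompact : IsCompact (I ×ˢ J) := isCompact_Icc.prod isCompact_Icc
  have hF_face : ∀ s ∈ I, ContinuousOn (fun p : ℝ × (Fin m → ℝ) ↦ F (i.insertNth s p.2)) (I ×ˢ J) :=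
    fun s hs ↦ hF.comp (by fun_prop) fun p hp ↦ hmem s hs p.2 hp.2
  rw [setIntegral_Icc_eq_setIntegral_prod_insertNth i l u,
    setIntegral_Icc_eq_setIntegral_prod_insertNth i l u]
  simp only [Fin.update_insertNth]
  refine setIntegral_prod_mono_of_forall_integral_le measurableSet_Icc ?_ ?_ fun w hw ↦ ?_
  · refine ContinuousOn.integrableOn_compact hcompact ?_
    simp only [slope_def_field]
    exact (((hF_face _ ⟨hlu, le_rfl⟩).sub (hF_face _ ⟨le_rfl, hlu⟩)).div_const _
      |>.sub continuousOn_const).abs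
  · exact ContinuousOn.integrableOn_compact hcompact
      ((hD.comp (by fun_prop) fun p hp ↦ hmem _ hp.1 _ hp.2).sub continuousOn_const).abs
  · have hline : MapsTo (fun t ↦ i.insertNth t w) I (Icc l u) := fun t ht ↦ hmem t ht w hw
    refine integral_Icc_abs_slope_sub_le (hF.comp (by fun_prop) hline) (fun t ht ↦ ?_)
      ((hD.comp (by fun_prop) hline).intervalIntegrable_of_Icc hlu) c
    simpa [Function.comp_def] using hderiv _ (hline (Ioo_subset_Icc_self ht))

theorem Binf_eq_preimage_ofLp_Icc {n : ℕ} (y : EuclideanSpace ℝ (Fin n)) (r : ℝ) :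
    Binf y r = WithLp.ofLp ⁻¹' Icc (fun j ↦ y j - r) (fun j ↦ y j + r) := by
  ext z
  simp only [Binf, mem_ofPred_eq, mem_preimage, mem_Icc, Pi.le_def, abs_sub_le_iff,
    ← forall_and]
  exact forall_congr' fun j ↦ by constructor <;> rintro ⟨h₁, h₂⟩ <;> constructor <;> linarith

theorem setIntegral_Binf_eq {E : Type*} [NormedAddCommGroup E] [NormedSpace ℝ E] {n : ℕ}
    (y : EuclideanSpace ℝ (Fin n)) (r : ℝ) (G : EuclideanSpace ℝ (Fin n) → E) :
    ∫ z in Binf y r, G z = ∫ x in Icc (fun j ↦ y j - r) (fun j ↦ y j + r), G (WithLp.toLp 2 x) := by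
  rw [Binf_eq_preimage_ofLp_Icc, ← (PiLp.volume_preserving_ofLp (Fin n)).setIntegral_preimage_emb
    (MeasurableEquiv.toLp 2 (Fin n → ℝ)).symm.measurableEmbedding]

section Gradient

variable {ι : Type*} [Fintype ι] [DecidableEq ι]

theorem EuclideanSpace.gradient_apply (f : EuclideanSpace ℝ ι → ℝ) (z : EuclideanSpace ℝ ι)
    (i : ι) :
    gradient f z i = fderiv ℝ f z (EuclideanSpace.single i 1) := by
  rw [← inner_gradient_left, EuclideanSpace.inner_single_right]
  simp

theorem ContDiffOn.continuousOn_gradient_apply {f : EuclideanSpace ℝ ι → ℝ}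
    {U : Set (EuclideanSpace ℝ ι)} (hf : ContDiffOn ℝ 1 f U) (hU : IsOpen U) (i : ι) : ContinuousOn (fun z ↦ gradient f z i) U := by
  simpa only [EuclideanSpace.gradient_apply] using
    (hf.continuousOn_fderiv_of_isOpen hU le_rfl).clm_apply continuousOn_const

theorem DifferentiableAt.hasDerivAt_comp_toLp_update {f : EuclideanSpace ℝ ι → ℝ} {x : ι → ℝ}
    (hf : DifferentiableAt ℝ f (WithLp.toLp 2 x)) (i : ι) :
    HasDerivAt (fun t ↦ f (WithLp.toLp 2 (Function.update x i t))) (gradient f (WithLp.toLp 2 x) i)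
      (x i) := by
  rw [EuclideanSpace.gradient_apply]
  exact hf.hasFDerivAt.comp_hasDerivAt_of_eq (x i)
    ((PiLp.hasFDerivAt_toLp 2 _).comp_hasDerivAt (x i) (hasDerivAt_update x i (x i)))
    (by simp)

end Gradient

theorem stmt5_general {n : ℕ} (r₂ : ℝ) (hr₂ : 0 < r₂)
    (y : EuclideanSpace ℝ (Fin n)) (i : Fin n) (f : EuclideanSpace ℝ (Fin n) → ℝ)
    (U : Set (EuclideanSpace ℝ (Fin n))) (hU : IsOpen U) (hBU : Binf y r₂ ⊆ U)
    (hf : ContDiffOn ℝ 1 f U)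
    (gi : ℝ) :
    ((2 * r₂) ^ n)⁻¹ *
        ∫ z in Binf y r₂,
          |(f (WithLp.toLp 2 (Function.update z i (y i + r₂))) - f (WithLp.toLp 2 (Function.update z i (y i - r₂)))) / (2 * r₂)
            - gi|
      ≤ ((2 * r₂) ^ n)⁻¹ * ∫ z in Binf y r₂, |gradient f z i - gi| := by
  obtain ⟨m, rfl⟩ := Nat.exists_eq_add_one_of_ne_zero i.pos.ne'
  have hmaps : MapsTo (WithLp.toLp 2) (Icc (fun j ↦ y j - r₂) (fun j ↦ y j + r₂)) U :=
    fun x hx ↦ hBU (by rwa [Binf_eq_preimage_ofLp_Icc])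
  rw [setIntegral_Binf_eq, setIntegral_Binf_eq]
  refine mul_le_mul_of_nonneg_left ?_ (by positivity)
  refine Eq.trans_le ?_ (setIntegral_Icc_abs_slope_sub_le (F := fun x ↦ f (WithLp.toLp 2 x))
    (D := fun x ↦ gradient f (WithLp.toLp 2 x) i) i
    (hf.continuousOn.comp (PiLp.continuous_toLp 2 _).continuousOn hmaps)
    ((hf.continuousOn_gradient_apply hU i).comp (PiLp.continuous_toLp 2 _).continuousOn hmaps)
    (fun x hx ↦ ?_) gi)
  · refine integral_congr_ae (ae_of_all _ fun x ↦ ?_)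
    simp only [slope_def_field]
    ring_nf
  · exact ((hf.differentiableOn one_ne_zero).differentiableAt
      (hU.mem_nhds (hmaps hx))).hasDerivAt_comp_toLp_update i

/-- Let `f` be continuously differentiable on an open neighborhood of
`B_∞(y, r₂)`, let `g̃ᵢ(z) = (f(βᵢ(z)) − f(αᵢ(z)))/(2r₂)` where `βᵢ(z)` (resp. `αᵢ(z)`) is `z`
with its `i`-th coordinate replaced by `yᵢ + r₂` (resp. `yᵢ − r₂`), and let `gᵢ` be the
average of `∂f/∂xᵢ` over `B_∞(y, r₂)`. Then, for `z` uniform on `B_∞(y, r₂)`,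
`E_z |g̃ᵢ(z) − gᵢ| ≤ E_z |∂f/∂xᵢ(z) − gᵢ|`. -/
theorem stmt5 {n : ℕ} (hn : 1 ≤ n) (r₂ : ℝ) (hr₂ : 0 < r₂)
    (y : EuclideanSpace ℝ (Fin n)) (i : Fin n) (f : EuclideanSpace ℝ (Fin n) → ℝ)
    (U : Set (EuclideanSpace ℝ (Fin n))) (hU : IsOpen U) (hBU : Binf y r₂ ⊆ U)
    (hf : ContDiffOn ℝ 1 f U)
    (gi : ℝ) (hgi : gi = ((2 * r₂) ^ n)⁻¹ * ∫ z in Binf y r₂, gradient f z i) :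
    ((2 * r₂) ^ n)⁻¹ *
        ∫ z in Binf y r₂,
          |(f (WithLp.toLp 2 (Function.update z i (y i + r₂))) - f (WithLp.toLp 2 (Function.update z i (y i - r₂)))) / (2 * r₂)
            - gi|
      ≤ ((2 * r₂) ^ n)⁻¹ * ∫ z in Binf y r₂, |gradient f z i - gi| :=
  stmt5_general r₂ hr₂ y i f U hU hBU hf gi
end

section
/- Let n ≥ 1, r₂ > 0, y ∈ ℝⁿ, and let f be a continuously differentiable function on an open neighborhood of B_∞(y, r₂). For z ∈ B_∞(y, r₂) and each i, let g̃ᵢ(z) = (f(βᵢ(z)) − f(αᵢ(z)))/(2r₂), where βᵢ(z) (resp. αᵢ(z)) is z with i-th coordinate replaced by yᵢ + r₂ (resp. yᵢ − r₂), and let g̃(z) = (g̃₁(z),…,g̃ₙ(z)). Let g(y) ∈ ℝⁿ be the average of ∇f over B_∞(y, r₂). Then E_{z}‖g̃(z) − ∇f(z)‖₁ ≤ 2 E_{z}‖∇f(z) − g(y)‖₁, where z is uniformly distributed on B_∞(y, r₂). -/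
open MeasureTheory

/-!
Fix a coordinate `i` and any constant `c`. By the fundamental theorem of calculus on the segment
through `z` parallel to the `i`-th axis, `g̃ᵢ(z) − c` is the average of `∂ᵢf − c` over that
segment, so `|g̃ᵢ(z) − c|` is at most the average of `|∂ᵢf − c|` there. Averaging over the
segments and integrating over the box gives back the box integral (Fubini), hence
`∫|g̃ᵢ − c| ≤ ∫|∂ᵢf − c|`. With `|g̃ᵢ − ∂ᵢf| ≤ |g̃ᵢ − c| + |∂ᵢf − c|` this yields
`∫|g̃ᵢ − ∂ᵢf| ≤ 2∫|∂ᵢf − c|`; take `c = g(y)ᵢ` and sum over `i`.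
-/

open Set Function WithLp
open scoped ENNReal

theorem enorm_sub_sub_mul_le_lintegral_enorm {φ φ' : ℝ → ℝ} {a b : ℝ} (c : ℝ) (hab : a ≤ b)
    (hderiv : ∀ t ∈ Icc a b, HasDerivAt φ (φ' t) t) (hint : IntegrableOn φ' (Icc a b)) :
    ‖φ b - φ a - (b - a) * c‖ₑ ≤ ∫⁻ t in Icc a b, ‖φ' t - c‖ₑ := by
  have hint' : IntervalIntegrable φ' volume a b :=
    (intervalIntegrable_iff_integrableOn_Icc_of_le hab).2 hint
  have hFTC : φ b - φ a - (b - a) * c = ∫ t in a..b, (φ' t - c) := by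
    rw [intervalIntegral.integral_sub hint' intervalIntegrable_const,
      intervalIntegral.integral_eq_sub_of_hasDerivAt (by rwa [uIcc_of_le hab]) hint',
      intervalIntegral.integral_const, smul_eq_mul]
  rw [hFTC, intervalIntegral.integral_of_le hab, ← setLIntegral_congr Ioc_ae_eq_Icc]
  exact enorm_integral_le_lintegral_enorm _

theorem lintegral_lintegral_update_pi {ι : Type*} [Fintype ι] [DecidableEq ι] {X : ι → Type*}
    [∀ i, MeasurableSpace (X i)] (μ : ∀ i, Measure (X i)) [∀ i, SigmaFinite (μ i)] (i : ι)
    {f : (∀ i, X i) → ℝ≥0∞} (hf : Measurable f) :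
    ∫⁻ x, ∫⁻ t, f (update x i t) ∂μ i ∂Measure.pi μ = μ i univ * ∫⁻ x, f x ∂Measure.pi μ := by
  have hconst : ∫⋯∫⁻_{i}, (∫⋯∫⁻_{i}, f ∂μ) ∂μ = ∫⋯∫⁻_{i}, (fun x => μ i univ * f x) ∂μ := by
    ext x
    simp only [lmarginal_singleton, update_idem, lintegral_const]
    rw [mul_comm]
    exact (lintegral_const_mul _ (hf.comp (measurable_update x))).symm
  rw [← lintegral_const_mul _ hf,
    ← lintegral_eq_of_lmarginal_eq {i} (hf.lmarginal μ) (hf.const_mul _) hconst,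
    lmarginal_singleton]

theorem Binf_eq_preimage_ofLp {n : ℕ} (y : EuclideanSpace ℝ (Fin n)) (r : ℝ) :
    Binf y r = ofLp ⁻¹' univ.pi fun j => Icc (y j - r) (y j + r) := by
  ext z
  simp only [Binf, mem_ofPred_eq, mem_preimage, mem_univ_pi, mem_Icc, abs_le]
  exact forall_congr' fun j => by constructor <;> intro h <;> constructor <;> linarith [h.1, h.2]

theorem isCompact_Binf {n : ℕ} (y : EuclideanSpace ℝ (Fin n)) (r : ℝ) :
    IsCompact (Binf y r) := by
  rw [Binf_eq_preimage_ofLp]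
  exact (PiLp.homeomorph 2 _).isCompact_preimage.2 (isCompact_univ_pi fun j => isCompact_Icc)

theorem setLIntegral_Binf_lintegral_update {n : ℕ} (y : EuclideanSpace ℝ (Fin n)) (r : ℝ)
    (i : Fin n) {h : EuclideanSpace ℝ (Fin n) → ℝ≥0∞} (hh : Measurable h) :
    ∫⁻ z in Binf y r, ∫⁻ t in Icc (y i - r) (y i + r), h (toLp 2 (update z i t))
      = volume (Icc (y i - r) (y i + r)) * ∫⁻ z in Binf y r, h z := by
  have hpres := PiLp.volume_preserving_toLp (Fin n)
  have hemb := (MeasurableEquiv.toLp 2 (Fin n → ℝ)).measurableEmbedding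
  rw [← hpres.setLIntegral_comp_preimage_emb hemb, ← hpres.setLIntegral_comp_preimage_emb hemb,
    Binf_eq_preimage_ofLp]
  change ∫⁻ x in univ.pi _, ∫⁻ t in _, h (toLp 2 (update x i t))
    = _ * ∫⁻ x in univ.pi _, h (toLp 2 x)
  rw [volume_pi, Measure.restrict_pi_pi]
  simpa using lintegral_lintegral_update_pi (fun j => volume.restrict (Icc (y j - r) (y j + r))) i
    (hh.comp (PiLp.continuous_toLp 2 _).measurable)

theorem toLp_update_mem_Binf {n : ℕ} {y z : EuclideanSpace ℝ (Fin n)} {r t : ℝ} {i : Fin n}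
    (hz : z ∈ Binf y r) (ht : t ∈ Icc (y i - r) (y i + r)) :
    toLp 2 (update z i t) ∈ Binf y r := by
  intro j
  rcases eq_or_ne j i with rfl | hj
  · simp only [update_self, abs_le]
    constructor <;> linarith [ht.1, ht.2]
  · simpa [update_of_ne hj] using hz j

theorem continuous_toLp_update {ι : Type*} [DecidableEq ι] (i : ι) :
    Continuous fun p : EuclideanSpace ℝ ι × ℝ => toLp 2 (update p.1 i p.2) := by
  fun_prop

theorem hasDerivAt_toLp_update {ι : Type*} [Fintype ι] [DecidableEq ι] (z : EuclideanSpace ℝ ι)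
    (i : ι) (t : ℝ) :
    HasDerivAt (fun s => toLp 2 (update z i s)) (EuclideanSpace.single i 1) t :=
  (PiLp.continuousLinearEquiv 2 ℝ _).symm.hasFDerivAt.comp_hasDerivAt t (hasDerivAt_update _ i t)

theorem DifferentiableAt.hasDerivAt_toLp_update {ι : Type*} [Fintype ι] [DecidableEq ι]
    {f : EuclideanSpace ℝ ι → ℝ} {z : EuclideanSpace ℝ ι} {i : ι} {t : ℝ}
    (hf : DifferentiableAt ℝ f (toLp 2 (update z i t))) :
    HasDerivAt (fun s => f (toLp 2 (update z i s))) (gradient f (toLp 2 (update z i t)) i) t := by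
  have := hf.hasGradientAt.hasFDerivAt.comp_hasDerivAt t (_root_.hasDerivAt_toLp_update z i t)
  rw [InnerProductSpace.toDual_apply_apply, EuclideanSpace.inner_single_right] at this
  simp only [one_mul, conj_trivial] at this
  exact this

theorem measurable_gradient {F : Type*} [NormedAddCommGroup F] [InnerProductSpace ℝ F]
    [CompleteSpace F] [MeasurableSpace F] [BorelSpace F] [SecondCountableTopology F]
    (f : F → ℝ) : Measurable (gradient f) :=
  (InnerProductSpace.toDual ℝ F).symm.continuous.measurable.comp (measurable_fderiv ℝ f)

theorem ContDiffOn.continuousOn_gradient {F : Type*} [NormedAddCommGroup F]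
    [InnerProductSpace ℝ F] [CompleteSpace F] {f : F → ℝ} {U : Set F} (hf : ContDiffOn ℝ 1 f U)
    (hU : IsOpen U) : ContinuousOn (gradient f) U :=
  (InnerProductSpace.toDual ℝ F).symm.continuous.comp_continuousOn
    (hf.continuousOn_fderiv_of_isOpen hU le_rfl)

noncomputable def boxDiffQuot {n : ℕ} (f : EuclideanSpace ℝ (Fin n) → ℝ)
    (y : EuclideanSpace ℝ (Fin n)) (r : ℝ) (i : Fin n) (z : EuclideanSpace ℝ (Fin n)) : ℝ :=
  (f (toLp 2 (update z i (y i + r))) - f (toLp 2 (update z i (y i - r)))) / (2 * r)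

section BoxDiffQuot

variable {n : ℕ} {f : EuclideanSpace ℝ (Fin n) → ℝ} {y : EuclideanSpace ℝ (Fin n)} {r : ℝ}

theorem continuousOn_boxDiffQuot {i : Fin n} (hr : 0 ≤ r) (hf : ContinuousOn f (Binf y r)) :
    ContinuousOn (boxDiffQuot f y r i) (Binf y r) := by
  have hcomp (t : ℝ) (ht : t ∈ Icc (y i - r) (y i + r)) :
      ContinuousOn (fun z : EuclideanSpace ℝ (Fin n) => f (toLp 2 (update z i t))) (Binf y r) :=
    hf.comp ((continuous_toLp_update i).comp (continuous_id.prodMk continuous_const)).continuousOn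
      fun z hz => toLp_update_mem_Binf hz ht
  exact ((hcomp _ ⟨by linarith, le_rfl⟩).sub (hcomp _ ⟨le_rfl, by linarith⟩)).div_const _

theorem lintegral_enorm_boxDiffQuot_sub_le {D : EuclideanSpace ℝ (Fin n) → ℝ} {i : Fin n}
    (hr : 0 < r) (c : ℝ) (hD : Measurable D) (hDc : ContinuousOn D (Binf y r))
    (hpartial : ∀ z ∈ Binf y r, ∀ t ∈ Icc (y i - r) (y i + r),
      HasDerivAt (fun s => f (toLp 2 (update z i s))) (D (toLp 2 (update z i t))) t) :
    ∫⁻ z in Binf y r, ‖boxDiffQuot f y r i z - c‖ₑ ≤ ∫⁻ z in Binf y r, ‖D z - c‖ₑ := by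
  have hpointwise : ∀ z ∈ Binf y r, ‖boxDiffQuot f y r i z - c‖ₑ ≤
      ENNReal.ofReal (2 * r)⁻¹ *
        ∫⁻ t in Icc (y i - r) (y i + r), ‖D (toLp 2 (update z i t)) - c‖ₑ := by
    intro z hz
    have hline : IntegrableOn (fun t => D (toLp 2 (update z i t))) (Icc (y i - r) (y i + r)) :=
      (hDc.comp ((continuous_toLp_update i).comp
        (continuous_const.prodMk continuous_id)).continuousOn
        fun t ht => toLp_update_mem_Binf hz ht).integrableOn_compact isCompact_Icc
    have hrewrite : boxDiffQuot f y r i z - c = (2 * r)⁻¹ * (f (toLp 2 (update z i (y i + r)))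
        - f (toLp 2 (update z i (y i - r))) - (y i + r - (y i - r)) * c) := by
      unfold boxDiffQuot
      field_simp
      ring
    rw [hrewrite, enorm_mul, Real.enorm_of_nonneg (by positivity)]
    gcongr
    exact enorm_sub_sub_mul_le_lintegral_enorm c (by linarith) (hpartial z hz) hline
  have hmeas : Measurable fun z => ‖D z - c‖ₑ := (hD.sub_const c).enorm
  calc ∫⁻ z in Binf y r, ‖boxDiffQuot f y r i z - c‖ₑ
      ≤ ∫⁻ z in Binf y r, ENNReal.ofReal (2 * r)⁻¹ *
          ∫⁻ t in Icc (y i - r) (y i + r), ‖D (toLp 2 (update z i t)) - c‖ₑ :=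
        setLIntegral_mono' (isCompact_Binf y r).measurableSet hpointwise
    _ = ENNReal.ofReal (2 * r)⁻¹ * ENNReal.ofReal (2 * r) * ∫⁻ z in Binf y r, ‖D z - c‖ₑ := by
        rw [lintegral_const_mul' _ _ ENNReal.ofReal_ne_top,
          setLIntegral_Binf_lintegral_update y r i hmeas, Real.volume_Icc,
          show y i + r - (y i - r) = 2 * r by ring, mul_assoc]
    _ = ∫⁻ z in Binf y r, ‖D z - c‖ₑ := by
        rw [← ENNReal.ofReal_mul (by positivity), inv_mul_cancel₀ (by positivity),
          ENNReal.ofReal_one, one_mul]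

theorem integral_abs_boxDiffQuot_sub_le {D : EuclideanSpace ℝ (Fin n) → ℝ} {i : Fin n}
    (hr : 0 < r) (c : ℝ) (hf : ContinuousOn f (Binf y r)) (hD : Measurable D)
    (hDc : ContinuousOn D (Binf y r))
    (hpartial : ∀ z ∈ Binf y r, ∀ t ∈ Icc (y i - r) (y i + r),
      HasDerivAt (fun s => f (toLp 2 (update z i s))) (D (toLp 2 (update z i t))) t) :
    ∫ z in Binf y r, |boxDiffQuot f y r i z - D z| ≤ 2 * ∫ z in Binf y r, |D z - c| := by
  have hB := isCompact_Binf y r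
  have hDint : IntegrableOn (fun z => D z - c) (Binf y r) :=
    (hDc.sub continuousOn_const).integrableOn_compact hB
  have hQD : AEStronglyMeasurable (fun z => boxDiffQuot f y r i z - D z)
      (volume.restrict (Binf y r)) :=
    ((continuousOn_boxDiffQuot hr.le hf).sub hDc).aestronglyMeasurable hB.measurableSet
  have hlintegral : ∫⁻ z in Binf y r, ‖boxDiffQuot f y r i z - D z‖ₑ
      ≤ 2 * ∫⁻ z in Binf y r, ‖D z - c‖ₑ := calc
    _ ≤ ∫⁻ z in Binf y r, (‖boxDiffQuot f y r i z - c‖ₑ + ‖D z - c‖ₑ) := by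
        gcongr with z
        simpa only [edist_eq_enorm_sub] using edist_triangle_right (boxDiffQuot f y r i z) (D z) c
    _ = (∫⁻ z in Binf y r, ‖boxDiffQuot f y r i z - c‖ₑ) + ∫⁻ z in Binf y r, ‖D z - c‖ₑ :=
        lintegral_add_right _ (hD.sub_const c).enorm
    _ ≤ (∫⁻ z in Binf y r, ‖D z - c‖ₑ) + ∫⁻ z in Binf y r, ‖D z - c‖ₑ :=
        add_le_add_left (lintegral_enorm_boxDiffQuot_sub_le hr c hD hDc hpartial) _
    _ = 2 * ∫⁻ z in Binf y r, ‖D z - c‖ₑ := by rw [two_mul]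
  simp_rw [← Real.norm_eq_abs]
  rw [integral_norm_eq_lintegral_enorm hQD,
    integral_norm_eq_lintegral_enorm hDint.aestronglyMeasurable, ← ENNReal.toReal_ofNat,
    ← ENNReal.toReal_mul]
  exact ENNReal.toReal_mono (ENNReal.mul_ne_top (by simp) hDint.2.ne) hlintegral

theorem integral_sum_abs_boxDiffQuot_sub_le {D : Fin n → EuclideanSpace ℝ (Fin n) → ℝ}
    (hr : 0 < r) (c : Fin n → ℝ) (hf : ContinuousOn f (Binf y r)) (hD : ∀ i, Measurable (D i))
    (hDc : ∀ i, ContinuousOn (D i) (Binf y r))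
    (hpartial : ∀ i, ∀ z ∈ Binf y r, ∀ t ∈ Icc (y i - r) (y i + r),
      HasDerivAt (fun s => f (toLp 2 (update z i s))) (D i (toLp 2 (update z i t))) t) :
    ∫ z in Binf y r, ∑ i, |boxDiffQuot f y r i z - D i z|
      ≤ 2 * ∫ z in Binf y r, ∑ i, |D i z - c i| := by
  have hB := isCompact_Binf y r
  have hint₁ (i : Fin n) : IntegrableOn (fun z => |boxDiffQuot f y r i z - D i z|) (Binf y r) :=
    ((continuousOn_boxDiffQuot hr.le hf).sub (hDc i)).abs.integrableOn_compact hB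
  have hint₂ (i : Fin n) : IntegrableOn (fun z => |D i z - c i|) (Binf y r) :=
    ((hDc i).sub continuousOn_const).abs.integrableOn_compact hB
  rw [integral_finsetSum _ fun i _ => hint₁ i, integral_finsetSum _ fun i _ => hint₂ i,
    Finset.mul_sum]
  exact Finset.sum_le_sum fun i _ =>
    integral_abs_boxDiffQuot_sub_le hr (c i) hf (hD i) (hDc i) (hpartial i)

end BoxDiffQuot

theorem stmt6_general {n : ℕ} (r₂ : ℝ) (hr₂ : 0 < r₂)
    (y : EuclideanSpace ℝ (Fin n)) (f : EuclideanSpace ℝ (Fin n) → ℝ)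
    (U : Set (EuclideanSpace ℝ (Fin n))) (hU : IsOpen U) (hBU : Binf y r₂ ⊆ U)
    (hf : ContDiffOn ℝ 1 f U)
    (gy : EuclideanSpace ℝ (Fin n)) :
    ((2 * r₂) ^ n)⁻¹ *
        ∫ z in Binf y r₂,
          ∑ i, |(f (WithLp.toLp 2 (Function.update z i (y i + r₂))) - f (WithLp.toLp 2 (Function.update z i (y i - r₂))))
                  / (2 * r₂) - gradient f z i|
      ≤ 2 * (((2 * r₂) ^ n)⁻¹ * ∫ z in Binf y r₂, ∑ i, |gradient f z i - gy i|) := by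
  have hdiff : ∀ x ∈ U, DifferentiableAt ℝ f x := fun x hx =>
    (hf.differentiableOn one_ne_zero).differentiableAt (hU.mem_nhds hx)
  have hgrad : ContinuousOn (gradient f) U := hf.continuousOn_gradient hU
  have key := integral_sum_abs_boxDiffQuot_sub_le (D := fun i z => gradient f z i) hr₂ gy
    (hf.continuousOn.mono hBU)
    (fun i => (PiLp.continuous_apply 2 _ i).measurable.comp (measurable_gradient f))
    (fun i => ((PiLp.continuous_apply 2 _ i).comp_continuousOn hgrad).mono hBU)
    (fun i z hz t ht => (hdiff _ (hBU (toLp_update_mem_Binf hz ht))).hasDerivAt_toLp_update)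
  rw [mul_left_comm]
  exact mul_le_mul_of_nonneg_left key (by positivity)

/-- Let `f` be continuously differentiable on an open neighborhood of
`B_∞(y, r₂)`, and for each `i` let `g̃ᵢ(z) = (f(βᵢ(z)) − f(αᵢ(z)))/(2r₂)` where `βᵢ(z)`
(resp. `αᵢ(z)`) is `z` with its `i`-th coordinate replaced by `yᵢ + r₂` (resp. `yᵢ − r₂`).
Let `g(y)` be the average of `∇f` over `B_∞(y, r₂)`. Then, for `z` uniform on `B_∞(y, r₂)`,
`E_z ‖g̃(z) − ∇f(z)‖₁ ≤ 2 E_z ‖∇f(z) − g(y)‖₁`. -/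
theorem stmt6 {n : ℕ} (hn : 1 ≤ n) (r₂ : ℝ) (hr₂ : 0 < r₂)
    (y : EuclideanSpace ℝ (Fin n)) (f : EuclideanSpace ℝ (Fin n) → ℝ)
    (U : Set (EuclideanSpace ℝ (Fin n))) (hU : IsOpen U) (hBU : Binf y r₂ ⊆ U)
    (hf : ContDiffOn ℝ 1 f U)
    (gy : EuclideanSpace ℝ (Fin n))
    (hgy : gy = ((2 * r₂) ^ n)⁻¹ • ∫ z in Binf y r₂, gradient f z) :
    ((2 * r₂) ^ n)⁻¹ *
        ∫ z in Binf y r₂,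
          ∑ i, |(f (WithLp.toLp 2 (Function.update z i (y i + r₂))) - f (WithLp.toLp 2 (Function.update z i (y i - r₂))))
                  / (2 * r₂) - gradient f z i|
      ≤ 2 * (((2 * r₂) ^ n)⁻¹ * ∫ z in Binf y r₂, ∑ i, |gradient f z i - gy i|) :=
  stmt6_general r₂ hr₂ y f U hU hBU hf gy
end
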